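/- arXiv:2105.13922 — 3 statements merged into one kernel-verified Lean document; each statement's English description precedes it below -/
import Mathlib

section
/- Let E : ℝ^m × ℝ^n → ℝ be twice continuously differentiable and set f = ∇_φ E, g = −∇_θ E (a zero-sum game). Then the first-order drift corrections of alternating gradient descent with m and k sub-steps per player are gradients of modified losses: −(1/2)((1/m)·f·∇_φ f + g·∇_θ f) = −∇_φ ( (1/(4m))‖∇_φ E‖² − (1/4)‖∇_θ E‖² ) and −(1/2)((1 − 2α/λ)·f·∇_φ g + (1/k)·g·∇_θ g) = −∇_θ ( −(1/4)(1 − 2α/λ)‖∇_φ E‖² + (1/(4k))‖∇_θ E‖² ). Consequently the modified system of Theorem 3.2 is the gradient flow dφ/ds = −∇_φ L̃₁, dθ/ds = −∇_θ L̃₂ with L̃₁ = −E + (αh/(4m))‖∇_φ E‖² − (αh/4)‖∇_θ E‖² and L̃₂ = E − (λh/4)(1 − 2α/λ)‖∇_φ E‖² + (λh/(4k))‖∇_θ E‖². -/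
/-!
Write `P = ∇_φ E`, `Q = ∇_θ E` and `H` for the Hessian of `E`. The derivatives of `f` and `-g`
are the `φ`- and `θ`-blocks of `H`, and since `E` is `C²` the Hessian is symmetric, so
`∇_φ ‖P‖² = 2 H_φφ P`, `∇_φ ‖Q‖² = 2 H_φθ Q`, `∇_θ ‖P‖² = 2 H_θφ P` and `∇_θ ‖Q‖² = 2 H_θθ Q`.
Each drift correction is a linear combination of these four vectors, and partial gradients are
linear, so it is the gradient of the same combination of `‖P‖²` and `‖Q‖²`.
-/

noncomputable section

/-- Gradient with respect to the first player's parameters `φ`. -/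
def gradPhi {m n : ℕ}
    (E : EuclideanSpace ℝ (Fin m) × EuclideanSpace ℝ (Fin n) → ℝ)
    (z : EuclideanSpace ℝ (Fin m) × EuclideanSpace ℝ (Fin n)) : EuclideanSpace ℝ (Fin m) :=
  gradient (fun φ => E (φ, z.2)) z.1

/-- Gradient with respect to the second player's parameters `θ`. -/
def gradTheta {m n : ℕ}
    (E : EuclideanSpace ℝ (Fin m) × EuclideanSpace ℝ (Fin n) → ℝ)
    (z : EuclideanSpace ℝ (Fin m) × EuclideanSpace ℝ (Fin n)) : EuclideanSpace ℝ (Fin n) :=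
  gradient (fun θ => E (z.1, θ)) z.2

open InnerProductSpace RealInnerProductSpace

section PartialGradients

variable {m n : ℕ} {E F G : EuclideanSpace ℝ (Fin m) × EuclideanSpace ℝ (Fin n) → ℝ}
  {z : EuclideanSpace ℝ (Fin m) × EuclideanSpace ℝ (Fin n)}

theorem gradPhi_eq (hF : DifferentiableAt ℝ F z) :
    gradPhi F z = (toDual ℝ _).symm ((fderiv ℝ F z).comp (.inl ℝ _ _)) := by
  have h : HasFDerivAt (fun φ => F (φ, z.2)) ((fderiv ℝ F z).comp (.inl ℝ _ _)) z.1 :=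
    hF.hasFDerivAt.comp z.1 (hasFDerivAt_prodMk_left z.1 z.2)
  rw [gradPhi, gradient, h.fderiv]

theorem gradTheta_eq (hF : DifferentiableAt ℝ F z) :
    gradTheta F z = (toDual ℝ _).symm ((fderiv ℝ F z).comp (.inr ℝ _ _)) := by
  have h : HasFDerivAt (fun θ => F (z.1, θ)) ((fderiv ℝ F z).comp (.inr ℝ _ _)) z.2 :=
    hF.hasFDerivAt.comp z.2 (hasFDerivAt_prodMk_right z.1 z.2)
  rw [gradTheta, gradient, h.fderiv]

theorem inner_gradPhi_left (hF : DifferentiableAt ℝ F z) (v : EuclideanSpace ℝ (Fin m)) :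
    ⟪gradPhi F z, v⟫ = fderiv ℝ F z (v, 0) := by
  rw [gradPhi_eq hF, toDual_symm_apply]; rfl

theorem inner_gradTheta_left (hF : DifferentiableAt ℝ F z) (v : EuclideanSpace ℝ (Fin n)) :
    ⟪gradTheta F z, v⟫ = fderiv ℝ F z (0, v) := by
  rw [gradTheta_eq hF, toDual_symm_apply]; rfl

theorem gradPhi_add (hF : DifferentiableAt ℝ F z) (hG : DifferentiableAt ℝ G z) :
    gradPhi (fun w => F w + G w) z = gradPhi F z + gradPhi G z := by
  rw [gradPhi_eq hF, gradPhi_eq hG, gradPhi_eq (hF.fun_add hG), fderiv_fun_add hF hG,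
    ContinuousLinearMap.add_comp, map_add]

theorem gradPhi_sub (hF : DifferentiableAt ℝ F z) (hG : DifferentiableAt ℝ G z) :
    gradPhi (fun w => F w - G w) z = gradPhi F z - gradPhi G z := by
  rw [gradPhi_eq hF, gradPhi_eq hG, gradPhi_eq (hF.fun_sub hG), fderiv_fun_sub hF hG,
    ContinuousLinearMap.sub_comp, map_sub]

theorem gradPhi_neg (hF : DifferentiableAt ℝ F z) :
    gradPhi (fun w => -F w) z = -gradPhi F z := by
  rw [gradPhi_eq hF, gradPhi_eq hF.fun_neg, fderiv_fun_neg, ContinuousLinearMap.neg_comp, map_neg]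

theorem gradPhi_const_mul (hF : DifferentiableAt ℝ F z) (c : ℝ) :
    gradPhi (fun w => c * F w) z = c • gradPhi F z := by
  rw [gradPhi_eq hF, gradPhi_eq (hF.const_mul c), fderiv_const_mul hF,
    ContinuousLinearMap.smul_comp, map_smul]

theorem gradTheta_add (hF : DifferentiableAt ℝ F z) (hG : DifferentiableAt ℝ G z) :
    gradTheta (fun w => F w + G w) z = gradTheta F z + gradTheta G z := by
  rw [gradTheta_eq hF, gradTheta_eq hG, gradTheta_eq (hF.fun_add hG), fderiv_fun_add hF hG,
    ContinuousLinearMap.add_comp, map_add]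

theorem gradTheta_sub (hF : DifferentiableAt ℝ F z) (hG : DifferentiableAt ℝ G z) :
    gradTheta (fun w => F w - G w) z = gradTheta F z - gradTheta G z := by
  rw [gradTheta_eq hF, gradTheta_eq hG, gradTheta_eq (hF.fun_sub hG), fderiv_fun_sub hF hG,
    ContinuousLinearMap.sub_comp, map_sub]

theorem gradTheta_const_mul (hF : DifferentiableAt ℝ F z) (c : ℝ) :
    gradTheta (fun w => c * F w) z = c • gradTheta F z := by
  rw [gradTheta_eq hF, gradTheta_eq (hF.const_mul c), fderiv_const_mul hF,
    ContinuousLinearMap.smul_comp, map_smul]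

theorem inner_gradPhi_norm_sq_left {X : Type*} [NormedAddCommGroup X] [InnerProductSpace ℝ X]
    {V : EuclideanSpace ℝ (Fin m) × EuclideanSpace ℝ (Fin n) → X} (hV : DifferentiableAt ℝ V z)
    (v : EuclideanSpace ℝ (Fin m)) :
    ⟪gradPhi (fun w => ‖V w‖ ^ 2) z, v⟫ = 2 * ⟪V z, fderiv ℝ V z (v, 0)⟫ := by
  rw [inner_gradPhi_left (hV.norm_sq ℝ), hV.hasFDerivAt.norm_sq.fderiv]
  simp

theorem inner_gradTheta_norm_sq_left {X : Type*} [NormedAddCommGroup X] [InnerProductSpace ℝ X]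
    {V : EuclideanSpace ℝ (Fin m) × EuclideanSpace ℝ (Fin n) → X} (hV : DifferentiableAt ℝ V z)
    (v : EuclideanSpace ℝ (Fin n)) :
    ⟪gradTheta (fun w => ‖V w‖ ^ 2) z, v⟫ = 2 * ⟪V z, fderiv ℝ V z (0, v)⟫ := by
  rw [inner_gradTheta_left (hV.norm_sq ℝ), hV.hasFDerivAt.norm_sq.fderiv]
  simp

theorem contDiff_gradPhi (hE : ContDiff ℝ 2 E) : ContDiff ℝ 1 (gradPhi E) := by
  have : gradPhi E = fun w => (toDual ℝ _).symm ((fderiv ℝ E w).comp (.inl ℝ _ _)) :=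
    funext fun w => gradPhi_eq (hE.differentiable two_ne_zero w)
  rw [this]
  exact (toDual ℝ _).symm.contDiff.comp ((hE.fderiv_right le_rfl).clm_comp contDiff_const)

theorem contDiff_gradTheta (hE : ContDiff ℝ 2 E) : ContDiff ℝ 1 (gradTheta E) := by
  have : gradTheta E = fun w => (toDual ℝ _).symm ((fderiv ℝ E w).comp (.inr ℝ _ _)) :=
    funext fun w => gradTheta_eq (hE.differentiable two_ne_zero w)
  rw [this]
  exact (toDual ℝ _).symm.contDiff.comp ((hE.fderiv_right le_rfl).clm_comp contDiff_const)

theorem inner_fderiv_gradPhi_left (hE : ContDiff ℝ 2 E)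
    (u : EuclideanSpace ℝ (Fin m) × EuclideanSpace ℝ (Fin n)) (v : EuclideanSpace ℝ (Fin m)) :
    ⟪fderiv ℝ (gradPhi E) z u, v⟫ = fderiv ℝ (fderiv ℝ E) z u (v, 0) := by
  have hinner : (fun w => ⟪gradPhi E w, v⟫) = fun w => fderiv ℝ E w (v, 0) :=
    funext fun w => inner_gradPhi_left (hE.differentiable two_ne_zero w) v
  calc ⟪fderiv ℝ (gradPhi E) z u, v⟫ = fderiv ℝ (fun w => ⟪gradPhi E w, v⟫) z u := by
        simp [fderiv_inner_apply ℝ ((contDiff_gradPhi hE).differentiable one_ne_zero z)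
          (differentiableAt_const v)]
    _ = fderiv ℝ (fderiv ℝ E) z u (v, 0) := by
        simp [hinner, fderiv_clm_apply ((hE.fderiv_right (m := 1) le_rfl).differentiable
          one_ne_zero z) (differentiableAt_const _)]

theorem inner_fderiv_gradTheta_left (hE : ContDiff ℝ 2 E)
    (u : EuclideanSpace ℝ (Fin m) × EuclideanSpace ℝ (Fin n)) (v : EuclideanSpace ℝ (Fin n)) :
    ⟪fderiv ℝ (gradTheta E) z u, v⟫ = fderiv ℝ (fderiv ℝ E) z u (0, v) := by
  have hinner : (fun w => ⟪gradTheta E w, v⟫) = fun w => fderiv ℝ E w (0, v) :=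
    funext fun w => inner_gradTheta_left (hE.differentiable two_ne_zero w) v
  calc ⟪fderiv ℝ (gradTheta E) z u, v⟫ = fderiv ℝ (fun w => ⟪gradTheta E w, v⟫) z u := by
        simp [fderiv_inner_apply ℝ ((contDiff_gradTheta hE).differentiable one_ne_zero z)
          (differentiableAt_const v)]
    _ = fderiv ℝ (fderiv ℝ E) z u (0, v) := by
        simp [hinner, fderiv_clm_apply ((hE.fderiv_right (m := 1) le_rfl).differentiable
          one_ne_zero z) (differentiableAt_const _)]

theorem gradPhi_norm_sq_gradPhi (hE : ContDiff ℝ 2 E) :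
    gradPhi (fun w => ‖gradPhi E w‖ ^ 2) z = (2 : ℝ) • fderiv ℝ (gradPhi E) z (gradPhi E z, 0) :=
  ext_inner_right ℝ fun v => by
    rw [inner_gradPhi_norm_sq_left ((contDiff_gradPhi hE).differentiable one_ne_zero z),
      real_inner_smul_left, real_inner_comm, inner_fderiv_gradPhi_left hE,
      inner_fderiv_gradPhi_left hE, (hE.contDiffAt.isSymmSndFDerivAt (by simp)).eq]

theorem gradPhi_norm_sq_gradTheta (hE : ContDiff ℝ 2 E) :
    gradPhi (fun w => ‖gradTheta E w‖ ^ 2) z =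
      (2 : ℝ) • fderiv ℝ (gradPhi E) z (0, gradTheta E z) :=
  ext_inner_right ℝ fun v => by
    rw [inner_gradPhi_norm_sq_left ((contDiff_gradTheta hE).differentiable one_ne_zero z),
      real_inner_smul_left, real_inner_comm, inner_fderiv_gradTheta_left hE,
      inner_fderiv_gradPhi_left hE, (hE.contDiffAt.isSymmSndFDerivAt (by simp)).eq]

theorem gradTheta_norm_sq_gradPhi (hE : ContDiff ℝ 2 E) :
    gradTheta (fun w => ‖gradPhi E w‖ ^ 2) z =
      (2 : ℝ) • fderiv ℝ (gradTheta E) z (gradPhi E z, 0) :=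
  ext_inner_right ℝ fun v => by
    rw [inner_gradTheta_norm_sq_left ((contDiff_gradPhi hE).differentiable one_ne_zero z),
      real_inner_smul_left, real_inner_comm, inner_fderiv_gradPhi_left hE,
      inner_fderiv_gradTheta_left hE, (hE.contDiffAt.isSymmSndFDerivAt (by simp)).eq]

theorem gradTheta_norm_sq_gradTheta (hE : ContDiff ℝ 2 E) :
    gradTheta (fun w => ‖gradTheta E w‖ ^ 2) z =
      (2 : ℝ) • fderiv ℝ (gradTheta E) z (0, gradTheta E z) :=
  ext_inner_right ℝ fun v => by
    rw [inner_gradTheta_norm_sq_left ((contDiff_gradTheta hE).differentiable one_ne_zero z),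
      real_inner_smul_left, real_inner_comm, inner_fderiv_gradTheta_left hE,
      inner_fderiv_gradTheta_left hE, (hE.contDiffAt.isSymmSndFDerivAt (by simp)).eq]

end PartialGradients

theorem zero_sum_alternating_modified_losses_general {m n : ℕ}
    (E : EuclideanSpace ℝ (Fin m) × EuclideanSpace ℝ (Fin n) → ℝ)
    (hE : ContDiff ℝ 2 E)
    (α lam h : ℝ)
    (msub ksub : ℕ)
    (f : EuclideanSpace ℝ (Fin m) × EuclideanSpace ℝ (Fin n) → EuclideanSpace ℝ (Fin m))
    (g : EuclideanSpace ℝ (Fin m) × EuclideanSpace ℝ (Fin n) → EuclideanSpace ℝ (Fin n))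
    (hfdef : f = fun z => gradPhi E z) (hgdef : g = fun z => -gradTheta E z) :
    ∀ z : EuclideanSpace ℝ (Fin m) × EuclideanSpace ℝ (Fin n),
      -- drift correction of the first player is a gradient
      (-(1 / 2 : ℝ)) •
          ((1 / (msub : ℝ)) • fderiv ℝ f z (f z, 0) + fderiv ℝ f z (0, g z)) =
        -gradPhi (fun w =>
          (1 / (4 * (msub : ℝ))) * ‖gradPhi E w‖ ^ 2 - (1 / 4) * ‖gradTheta E w‖ ^ 2) z ∧
      -- drift correction of the second player is a gradient
      (-(1 / 2 : ℝ)) •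
          ((1 - 2 * α / lam) • fderiv ℝ g z (f z, 0) +
            (1 / (ksub : ℝ)) • fderiv ℝ g z (0, g z)) =
        -gradTheta (fun w =>
          -(1 / 4) * (1 - 2 * α / lam) * ‖gradPhi E w‖ ^ 2 +
            (1 / (4 * (ksub : ℝ))) * ‖gradTheta E w‖ ^ 2) z ∧
      -- the modified system is the gradient flow of the modified losses
      f z - (α * h / 2) •
          ((1 / (msub : ℝ)) • fderiv ℝ f z (f z, 0) + fderiv ℝ f z (0, g z)) =
        -gradPhi (fun w =>
          -E w + (α * h / (4 * (msub : ℝ))) * ‖gradPhi E w‖ ^ 2 -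
            (α * h / 4) * ‖gradTheta E w‖ ^ 2) z ∧
      g z - (lam * h / 2) •
          ((1 - 2 * α / lam) • fderiv ℝ g z (f z, 0) +
            (1 / (ksub : ℝ)) • fderiv ℝ g z (0, g z)) =
        -gradTheta (fun w =>
          E w - (lam * h / 4) * (1 - 2 * α / lam) * ‖gradPhi E w‖ ^ 2 +
            (lam * h / (4 * (ksub : ℝ))) * ‖gradTheta E w‖ ^ 2) z := by
  subst hfdef hgdef
  intro z
  have hEz : DifferentiableAt ℝ E z := hE.differentiable two_ne_zero z
  have hnormPhi : DifferentiableAt ℝ (fun w => ‖gradPhi E w‖ ^ 2) z :=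
    ((contDiff_gradPhi hE).differentiable one_ne_zero z).norm_sq ℝ
  have hnormTheta : DifferentiableAt ℝ (fun w => ‖gradTheta E w‖ ^ 2) z :=
    ((contDiff_gradTheta hE).differentiable one_ne_zero z).norm_sq ℝ
  have hzero_neg : ((0 : EuclideanSpace ℝ (Fin m)), -gradTheta E z) = -(0, gradTheta E z) := by
    simp
  rw [fderiv_fun_neg, hzero_neg,
    gradPhi_sub (hnormPhi.const_mul _) (hnormTheta.const_mul _),
    gradPhi_sub (hEz.fun_neg.fun_add (hnormPhi.const_mul _)) (hnormTheta.const_mul _),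
    gradPhi_add hEz.fun_neg (hnormPhi.const_mul _), gradPhi_neg hEz,
    gradTheta_add (hnormPhi.const_mul _) (hnormTheta.const_mul _),
    gradTheta_add (hEz.fun_sub (hnormPhi.const_mul _)) (hnormTheta.const_mul _),
    gradTheta_sub hEz (hnormPhi.const_mul _)]
  simp only [gradPhi_const_mul hnormPhi, gradPhi_const_mul hnormTheta, gradTheta_const_mul hnormPhi,
    gradTheta_const_mul hnormTheta, gradPhi_norm_sq_gradPhi hE, gradPhi_norm_sq_gradTheta hE,
    gradTheta_norm_sq_gradPhi hE, gradTheta_norm_sq_gradTheta hE, map_neg,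
    neg_apply]
  refine ⟨?_, ?_, ?_, ?_⟩ <;> module

/-- **Corollary 6.2 (zero-sum alternating gradient descent).**
In a zero-sum game (`f = ∇_φ E`, `g = −∇_θ E`), the first-order drift corrections of
alternating gradient descent with `m` and `k` sub-steps per player are gradients of modified
losses, and consequently the modified system of Theorem 3.2 is the gradient flow of
`L̃₁ = −E + (αh/(4m))‖∇_φ E‖² − (αh/4)‖∇_θ E‖²` and
`L̃₂ = E − (λh/4)(1 − 2α/λ)‖∇_φ E‖² + (λh/(4k))‖∇_θ E‖²`. -/
theorem zero_sum_alternating_modified_losses {m n : ℕ}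
    (E : EuclideanSpace ℝ (Fin m) × EuclideanSpace ℝ (Fin n) → ℝ)
    (hE : ContDiff ℝ 2 E)
    (α lam h : ℝ) (hα : 0 < α) (hlam : 0 < lam) (hh : 0 < h)
    (msub ksub : ℕ) (hmsub : 0 < msub) (hksub : 0 < ksub)
    (f : EuclideanSpace ℝ (Fin m) × EuclideanSpace ℝ (Fin n) → EuclideanSpace ℝ (Fin m))
    (g : EuclideanSpace ℝ (Fin m) × EuclideanSpace ℝ (Fin n) → EuclideanSpace ℝ (Fin n))
    (hfdef : f = fun z => gradPhi E z) (hgdef : g = fun z => -gradTheta E z) :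
    ∀ z : EuclideanSpace ℝ (Fin m) × EuclideanSpace ℝ (Fin n),
      -- drift correction of the first player is a gradient
      (-(1 / 2 : ℝ)) •
          ((1 / (msub : ℝ)) • fderiv ℝ f z (f z, 0) + fderiv ℝ f z (0, g z)) =
        -gradPhi (fun w =>
          (1 / (4 * (msub : ℝ))) * ‖gradPhi E w‖ ^ 2 - (1 / 4) * ‖gradTheta E w‖ ^ 2) z ∧
      -- drift correction of the second player is a gradient
      (-(1 / 2 : ℝ)) •
          ((1 - 2 * α / lam) • fderiv ℝ g z (f z, 0) +
            (1 / (ksub : ℝ)) • fderiv ℝ g z (0, g z)) =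
        -gradTheta (fun w =>
          -(1 / 4) * (1 - 2 * α / lam) * ‖gradPhi E w‖ ^ 2 +
            (1 / (4 * (ksub : ℝ))) * ‖gradTheta E w‖ ^ 2) z ∧
      -- the modified system is the gradient flow of the modified losses
      f z - (α * h / 2) •
          ((1 / (msub : ℝ)) • fderiv ℝ f z (f z, 0) + fderiv ℝ f z (0, g z)) =
        -gradPhi (fun w =>
          -E w + (α * h / (4 * (msub : ℝ))) * ‖gradPhi E w‖ ^ 2 -
            (α * h / 4) * ‖gradTheta E w‖ ^ 2) z ∧
      g z - (lam * h / 2) •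
          ((1 - 2 * α / lam) • fderiv ℝ g z (f z, 0) +
            (1 / (ksub : ℝ)) • fderiv ℝ g z (0, g z)) =
        -gradTheta (fun w =>
          E w - (lam * h / 4) * (1 - 2 * α / lam) * ‖gradPhi E w‖ ^ 2 +
            (lam * h / (4 * (ksub : ℝ))) * ‖gradTheta E w‖ ^ 2) z :=
  zero_sum_alternating_modified_losses_general E hE α lam h msub ksub f g hfdef hgdef
end
end

section
/- Let E : ℝ^m × ℝ^n → ℝ be three-times continuously differentiable, set f = ∇_φ E and g = −∇_θ E (zero-sum game with simultaneous gradient descent), and let (φ*, θ*) be an equilibrium (f = 0 = g there). Then the trace of the modified Jacobian satisfies Tr(J̃) = Tr(J) − (h/2)(α‖∇_{φφ}E‖_F² + λ‖∇_{θθ}E‖_F²) + (h/2)(α + λ)‖∇_{φθ}E‖_F², where J is the Jacobian of (f, g) at (φ*, θ*), ∇_{φφ}E, ∇_{θθ}E, ∇_{φθ}E are the Hessian blocks of E at (φ*, θ*), and ‖·‖_F is the Frobenius norm. -/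
/-! At an equilibrium the correction term `z ↦ (∇F)(z) F(z)` has derivative `J²`, because `F`
vanishes there. Hence `J̃ = J - (h/2) diag(α, λ) J²`. By symmetry of the Hessian of `E`,
`J = [[A, Cᵀ], [-C, -D]]` with `A`, `D` symmetric, so the diagonal blocks of `J²` are `A² - CᵀC` and
`D² - CCᵀ`, whose traces are `‖A‖_F² - ‖C‖_F²` and `‖D‖_F² - ‖C‖_F²`. -/

noncomputable section

/-- Partial (Fréchet) derivative with respect to the first player's parameters `φ`. -/
def dPhi {m n : ℕ} {W : Type*} [NormedAddCommGroup W] [NormedSpace ℝ W]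
    (f : EuclideanSpace ℝ (Fin m) × EuclideanSpace ℝ (Fin n) → W)
    (z : EuclideanSpace ℝ (Fin m) × EuclideanSpace ℝ (Fin n)) :
    EuclideanSpace ℝ (Fin m) →L[ℝ] W :=
  (fderiv ℝ f z).comp (ContinuousLinearMap.inl ℝ (EuclideanSpace ℝ (Fin m)) (EuclideanSpace ℝ (Fin n)))

/-- Partial (Fréchet) derivative with respect to the second player's parameters `θ`. -/
def dTheta {m n : ℕ} {W : Type*} [NormedAddCommGroup W] [NormedSpace ℝ W]
    (f : EuclideanSpace ℝ (Fin m) × EuclideanSpace ℝ (Fin n) → W)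
    (z : EuclideanSpace ℝ (Fin m) × EuclideanSpace ℝ (Fin n)) :
    EuclideanSpace ℝ (Fin n) →L[ℝ] W :=
  (fderiv ℝ f z).comp (ContinuousLinearMap.inr ℝ (EuclideanSpace ℝ (Fin m)) (EuclideanSpace ℝ (Fin n)))

/-- Squared Frobenius norm of a linear map between Euclidean spaces, `‖T‖_F² = Tr(Tᵀ T)`. -/
def frobSq {a b : ℕ} (T : EuclideanSpace ℝ (Fin a) →L[ℝ] EuclideanSpace ℝ (Fin b)) : ℝ :=
  LinearMap.trace ℝ (EuclideanSpace ℝ (Fin a))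
    ((ContinuousLinearMap.adjoint T ∘L T : EuclideanSpace ℝ (Fin a) →L[ℝ] EuclideanSpace ℝ (Fin a)) :
      _ →ₗ[ℝ] _)

open ContinuousLinearMap InnerProductSpace

section Riesz

variable {X M N : Type*} [NormedAddCommGroup X] [NormedSpace ℝ X]
  [NormedAddCommGroup M] [InnerProductSpace ℝ M] [CompleteSpace M]
  [NormedAddCommGroup N] [InnerProductSpace ℝ N] [CompleteSpace N]

/-- The Riesz representative of `T ∘L ι`; applied to `fderiv ℝ E z` with `ι = inl, inr` it is a
partial gradient of `E`. -/
def rieszComp (ι : M →L[ℝ] X) : (X →L[ℝ] ℝ) →L[ℝ] M :=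
  (toDual ℝ M).symm.toLinearIsometry.toContinuousLinearMap ∘L precomp ℝ ι

theorem inner_rieszComp_apply (ι : M →L[ℝ] X) (T : X →L[ℝ] ℝ) (v : M) :
    ⟪rieszComp ι T, v⟫_ℝ = T (ι v) :=
  toDual_symm_apply

theorem adjoint_rieszComp_comp_comp (H : X →L[ℝ] X →L[ℝ] ℝ) (hH : ∀ u v, H u v = H v u)
    (ι : M →L[ℝ] X) (κ : N →L[ℝ] X) :
    adjoint (rieszComp ι ∘L H ∘L κ) = rieszComp κ ∘L H ∘L ι := by
  refine ContinuousLinearMap.ext fun u => ext_inner_right ℝ fun v => ?_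
  rw [adjoint_inner_left, real_inner_comm]
  simp only [comp_apply, inner_rieszComp_apply, hH]

end Riesz

section PartialGradient

variable {m n : ℕ} {E : EuclideanSpace ℝ (Fin m) × EuclideanSpace ℝ (Fin n) → ℝ}
  {z : EuclideanSpace ℝ (Fin m) × EuclideanSpace ℝ (Fin n)}

theorem gradPhi_eq_rieszComp (hE : Differentiable ℝ E) :
    (fun z => gradPhi E z) = fun z => rieszComp (inl ℝ _ _) (fderiv ℝ E z) := by
  funext z
  have h : HasFDerivAt (fun φ => E (φ, z.2)) (fderiv ℝ E z ∘L inl ℝ _ _) z.1 :=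
    (hE z).hasFDerivAt.comp z.1 (hasFDerivAt_prodMk_left z.1 z.2)
  rw [gradPhi, gradient, h.fderiv]
  rfl

theorem gradTheta_eq_rieszComp (hE : Differentiable ℝ E) :
    (fun z => gradTheta E z) = fun z => rieszComp (inr ℝ _ _) (fderiv ℝ E z) := by
  funext z
  have h : HasFDerivAt (fun θ => E (z.1, θ)) (fderiv ℝ E z ∘L inr ℝ _ _) z.2 :=
    (hE z).hasFDerivAt.comp z.2 (hasFDerivAt_prodMk_right z.1 z.2)
  rw [gradTheta, gradient, h.fderiv]
  rfl

theorem contDiff_gradPhi_s12 {k : WithTop ℕ∞} (hE : ContDiff ℝ (k + 1) E) :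
    ContDiff ℝ k (fun z => gradPhi E z) := by
  rw [gradPhi_eq_rieszComp (hE.differentiable (by simp))]
  exact (rieszComp _).contDiff.comp (hE.fderiv_right le_rfl)

theorem contDiff_gradTheta_s12 {k : WithTop ℕ∞} (hE : ContDiff ℝ (k + 1) E) :
    ContDiff ℝ k (fun z => gradTheta E z) := by
  rw [gradTheta_eq_rieszComp (hE.differentiable (by simp))]
  exact (rieszComp _).contDiff.comp (hE.fderiv_right le_rfl)

theorem fderiv_gradPhi (hE : ContDiff ℝ 2 E) :
    fderiv ℝ (fun z => gradPhi E z) z = rieszComp (inl ℝ _ _) ∘L fderiv ℝ (fderiv ℝ E) z := by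
  rw [gradPhi_eq_rieszComp (hE.differentiable (by norm_num))]
  exact ((rieszComp _).hasFDerivAt.comp z
    ((hE.fderiv_right (m := 1) le_rfl).differentiable one_ne_zero z).hasFDerivAt).fderiv

theorem fderiv_gradTheta (hE : ContDiff ℝ 2 E) :
    fderiv ℝ (fun z => gradTheta E z) z = rieszComp (inr ℝ _ _) ∘L fderiv ℝ (fderiv ℝ E) z := by
  rw [gradTheta_eq_rieszComp (hE.differentiable (by norm_num))]
  exact ((rieszComp _).hasFDerivAt.comp z
    ((hE.fderiv_right (m := 1) le_rfl).differentiable one_ne_zero z).hasFDerivAt).fderiv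

theorem adjoint_dPhi_gradPhi (hE : ContDiff ℝ 2 E) :
    adjoint (dPhi (fun z => gradPhi E z) z) = dPhi (fun z => gradPhi E z) z := by
  rw [dPhi, fderiv_gradPhi hE]
  exact adjoint_rieszComp_comp_comp _ (hE.contDiffAt.isSymmSndFDerivAt (by simp)) _ _

theorem adjoint_dTheta_gradTheta (hE : ContDiff ℝ 2 E) :
    adjoint (dTheta (fun z => gradTheta E z) z) = dTheta (fun z => gradTheta E z) z := by
  rw [dTheta, fderiv_gradTheta hE]
  exact adjoint_rieszComp_comp_comp _ (hE.contDiffAt.isSymmSndFDerivAt (by simp)) _ _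

theorem adjoint_dPhi_gradTheta (hE : ContDiff ℝ 2 E) :
    adjoint (dPhi (fun z => gradTheta E z) z) = dTheta (fun z => gradPhi E z) z := by
  rw [dPhi, dTheta, fderiv_gradPhi hE, fderiv_gradTheta hE]
  exact adjoint_rieszComp_comp_comp _ (hE.contDiffAt.isSymmSndFDerivAt (by simp)) _ _

end PartialGradient

namespace LinearMap

variable {R M N : Type*} [CommRing R] [AddCommGroup M] [Module R M] [Module.Free R M]
  [Module.Finite R M] [AddCommGroup N] [Module R N] [Module.Free R N] [Module.Finite R N]

theorem trace_prod (U : M × N →ₗ[R] M) (V : M × N →ₗ[R] N) :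
    trace R (M × N) (U.prod V) = trace R M (U ∘ₗ inl R M N) + trace R N (V ∘ₗ inr R M N) := by
  have h : U.prod V = inl R M N ∘ₗ U + inr R M N ∘ₗ V := by
    ext <;> simp
  rw [h, map_add, trace_comp_comm' (inl R M N), trace_comp_comm' (inr R M N)]

theorem trace_prod_sub_smul_comp_prod (P : M × N →ₗ[R] M) (Q : M × N →ₗ[R] N) (a b : R) :
    trace R (M × N) ((P - a • P ∘ₗ P.prod Q).prod (Q - b • Q ∘ₗ P.prod Q)) =
      trace R (M × N) (P.prod Q) - a * trace R M ((P ∘ₗ inl R M N) ∘ₗ P ∘ₗ inl R M N)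
        - b * trace R N ((Q ∘ₗ inr R M N) ∘ₗ Q ∘ₗ inr R M N)
        - (a + b) * trace R M ((P ∘ₗ inr R M N) ∘ₗ Q ∘ₗ inl R M N) := by
  have hP : (P ∘ₗ P.prod Q) ∘ₗ inl R M N =
      (P ∘ₗ inl R M N) ∘ₗ P ∘ₗ inl R M N + (P ∘ₗ inr R M N) ∘ₗ Q ∘ₗ inl R M N := by
    ext; simp [← map_add]
  have hQ : (Q ∘ₗ P.prod Q) ∘ₗ inr R M N =
      (Q ∘ₗ inl R M N) ∘ₗ P ∘ₗ inr R M N + (Q ∘ₗ inr R M N) ∘ₗ Q ∘ₗ inr R M N := by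
    ext; simp [← map_add]
  simp only [trace_prod, sub_comp, smul_comp, map_sub, map_smul, map_add, hP, hQ, smul_eq_mul]
  rw [trace_comp_comm' (Q ∘ₗ inl R M N)]
  ring

end LinearMap

section ModifiedField

variable {𝕜 X W : Type*} [NontriviallyNormedField 𝕜] [NormedAddCommGroup X] [NormedSpace 𝕜 X]
  [NormedAddCommGroup W] [NormedSpace 𝕜 W]

theorem hasFDerivAt_fderiv_apply_of_eq_zero {f : X → W} {F : X → X} {J : X →L[𝕜] X} {z : X}
    (hf : DifferentiableAt 𝕜 (fderiv 𝕜 f) z) (hF : HasFDerivAt F J z) (hFz : F z = 0) :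
    HasFDerivAt (fun x => fderiv 𝕜 f x (F x)) (fderiv 𝕜 f z ∘L J) z := by
  simpa [hFz] using hf.hasFDerivAt.clm_apply hF

variable {M N : Type*} [NormedAddCommGroup M] [NormedSpace 𝕜 M] [NormedAddCommGroup N]
  [NormedSpace 𝕜 N]

theorem hasFDerivAt_prod_sub_smul_fderiv_apply {f : M × N → M} {g : M × N → N} {z : M × N}
    (hf : ContDiffAt 𝕜 2 f z) (hg : ContDiffAt 𝕜 2 g z) (hfz : f z = 0) (hgz : g z = 0)
    (a b : 𝕜) :
    HasFDerivAt (fun x => (f x - a • fderiv 𝕜 f x (f x, g x), g x - b • fderiv 𝕜 g x (f x, g x)))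
      ((fderiv 𝕜 f z - a • fderiv 𝕜 f z ∘L (fderiv 𝕜 f z).prod (fderiv 𝕜 g z)).prod
        (fderiv 𝕜 g z - b • fderiv 𝕜 g z ∘L (fderiv 𝕜 f z).prod (fderiv 𝕜 g z))) z := by
  have hf' := (hf.differentiableAt (by simp)).hasFDerivAt
  have hg' := (hg.differentiableAt (by simp)).hasFDerivAt
  have hF := hf'.prodMk hg'
  have hFz : (f z, g z) = 0 := by simp [hfz, hgz]
  have hdf := (hf.fderiv_right (m := 1) le_rfl).differentiableAt one_ne_zero
  have hdg := (hg.fderiv_right (m := 1) le_rfl).differentiableAt one_ne_zero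
  exact (hf'.sub ((hasFDerivAt_fderiv_apply_of_eq_zero hdf hF hFz).const_smul a)).prodMk
    (hg'.sub ((hasFDerivAt_fderiv_apply_of_eq_zero hdg hF hFz).const_smul b))

end ModifiedField

theorem modified_jacobian_trace_zero_sum_general {m n : ℕ}
    (E : EuclideanSpace ℝ (Fin m) × EuclideanSpace ℝ (Fin n) → ℝ)
    (hE : ContDiff ℝ 3 E)
    (f : EuclideanSpace ℝ (Fin m) × EuclideanSpace ℝ (Fin n) → EuclideanSpace ℝ (Fin m))
    (g : EuclideanSpace ℝ (Fin m) × EuclideanSpace ℝ (Fin n) → EuclideanSpace ℝ (Fin n))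
    (hfdef : f = fun z => gradPhi E z) (hgdef : g = fun z => -gradTheta E z)
    (zs : EuclideanSpace ℝ (Fin m) × EuclideanSpace ℝ (Fin n))
    (hfz : f zs = 0) (hgz : g zs = 0)
    (α lam h : ℝ)
    (Ftilde : EuclideanSpace ℝ (Fin m) × EuclideanSpace ℝ (Fin n) →
      EuclideanSpace ℝ (Fin m) × EuclideanSpace ℝ (Fin n))
    (hFtilde : Ftilde = fun z =>
      (f z - (α * h / 2) • fderiv ℝ f z (f z, g z),
       g z - (lam * h / 2) • fderiv ℝ g z (f z, g z))) :
    LinearMap.trace ℝ (EuclideanSpace ℝ (Fin m) × EuclideanSpace ℝ (Fin n))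
        (fderiv ℝ Ftilde zs : _ →ₗ[ℝ] _) =
      LinearMap.trace ℝ (EuclideanSpace ℝ (Fin m) × EuclideanSpace ℝ (Fin n))
          (fderiv ℝ (fun z => (f z, g z)) zs : _ →ₗ[ℝ] _) -
        (h / 2) *
          (α * frobSq (dPhi (fun z => gradPhi E z) zs) +
            lam * frobSq (dTheta (fun z => gradTheta E z) zs)) +
        (h / 2) * (α + lam) * frobSq (dPhi (fun z => gradTheta E z) zs) := by
  subst hFtilde hfdef hgdef
  have hE2 : ContDiff ℝ 2 E := hE.of_le (by norm_num)
  have hf : ContDiff ℝ 2 fun z => gradPhi E z := contDiff_gradPhi_s12 hE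
  have hg : ContDiff ℝ 2 fun z => -gradTheta E z := (contDiff_gradTheta_s12 hE).neg
  rw [(hasFDerivAt_prod_sub_smul_fderiv_apply hf.contDiffAt hg.contDiffAt hfz hgz _ _).fderiv,
    (hf.differentiable two_ne_zero zs).fderiv_prodMk (hg.differentiable two_ne_zero zs),
    frobSq, frobSq, frobSq, adjoint_dPhi_gradPhi hE2, adjoint_dTheta_gradTheta hE2,
    adjoint_dPhi_gradTheta hE2]
  simp only [coe_prod, toLinearMap_sub, toLinearMap_smul, toLinearMap_comp]
  rw [LinearMap.trace_prod_sub_smul_comp_prod]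
  simp only [dPhi, dTheta, fderiv_fun_neg, toLinearMap_comp, toLinearMap_neg, coe_inl, coe_inr,
    LinearMap.neg_comp, LinearMap.comp_neg, map_neg, LinearMap.comp_assoc]
  ring

/-- **Trace of the modified Jacobian in zero-sum games (simultaneous gradient descent).**
With `f = ∇_φ E`, `g = −∇_θ E`, at an equilibrium,
`Tr(J̃) = Tr(J) − (h/2)(α‖∇_{φφ}E‖_F² + λ‖∇_{θθ}E‖_F²) + (h/2)(α + λ)‖∇_{φθ}E‖_F²`. -/
theorem modified_jacobian_trace_zero_sum {m n : ℕ}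
    (E : EuclideanSpace ℝ (Fin m) × EuclideanSpace ℝ (Fin n) → ℝ)
    (hE : ContDiff ℝ 3 E)
    (f : EuclideanSpace ℝ (Fin m) × EuclideanSpace ℝ (Fin n) → EuclideanSpace ℝ (Fin m))
    (g : EuclideanSpace ℝ (Fin m) × EuclideanSpace ℝ (Fin n) → EuclideanSpace ℝ (Fin n))
    (hfdef : f = fun z => gradPhi E z) (hgdef : g = fun z => -gradTheta E z)
    (zs : EuclideanSpace ℝ (Fin m) × EuclideanSpace ℝ (Fin n))
    (hfz : f zs = 0) (hgz : g zs = 0)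
    (α lam h : ℝ) (hα : 0 < α) (hlam : 0 < lam) (hh : 0 < h)
    (Ftilde : EuclideanSpace ℝ (Fin m) × EuclideanSpace ℝ (Fin n) →
      EuclideanSpace ℝ (Fin m) × EuclideanSpace ℝ (Fin n))
    (hFtilde : Ftilde = fun z =>
      (f z - (α * h / 2) • fderiv ℝ f z (f z, g z),
       g z - (lam * h / 2) • fderiv ℝ g z (f z, g z))) :
    LinearMap.trace ℝ (EuclideanSpace ℝ (Fin m) × EuclideanSpace ℝ (Fin n))
        (fderiv ℝ Ftilde zs : _ →ₗ[ℝ] _) =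
      LinearMap.trace ℝ (EuclideanSpace ℝ (Fin m) × EuclideanSpace ℝ (Fin n))
          (fderiv ℝ (fun z => (f z, g z)) zs : _ →ₗ[ℝ] _) -
        (h / 2) *
          (α * frobSq (dPhi (fun z => gradPhi E z) zs) +
            lam * frobSq (dTheta (fun z => gradTheta E z) zs)) +
        (h / 2) * (α + lam) * frobSq (dPhi (fun z => gradTheta E z) zs) :=
  modified_jacobian_trace_zero_sum_general E hE f g hfdef hgdef zs hfz hgz α lam h Ftilde hFtilde
end
end

section
/- Let f : ℝ^m × ℝ^n → ℝ^m and g : ℝ^m × ℝ^n → ℝ^n be twice continuously differentiable, let (φ*, θ*) satisfy f(φ*, θ*) = 0 and g(φ*, θ*) = 0, and let f̃ = f − (αh/2)((1/m)f·∇_φ f + g·∇_θ f), g̃ = g − (λh/2)((1 − 2α/λ)f·∇_φ g + (1/k)g·∇_θ g) be the modified vector fields of alternating gradient descent with m and k sub-steps. Then the Jacobian of (f̃, g̃) at (φ*, θ*) equals J − (h/2)·K_alt, where J is the Jacobian of (f, g) at (φ*, θ*) and K_alt has blocks (α/m)(∇_φ f)² + α∇_φ g·∇_θ f; (α/m)∇_θ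 f·∇_φ f + α∇_θ g·∇_θ f; (λ/k)∇_φ g·∇_θ g + λ(1 − 2α/λ)∇_φ f·∇_φ g; (λ/k)(∇_θ g)² + λ(1 − 2α/λ)∇_θ f·∇_φ g. In particular Tr(J̃) = Tr(J) − (h/2)((α/m)Tr((∇_φ f)²) + (λ/k)Tr((∇_θ g)²)) − (h/2)(λ − α)Tr(∇_φ g·∇_θ f). -/
noncomputable section

/-!
Write `A = ∂f` and `B = ∂g` at the equilibrium `z*`. Each correction term of the modified field
has the form `z ↦ D p(z) (u z)` with `u z* = 0`, so the second derivative of `p` drops out of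
its Jacobian and only `∂p(z*) ∘ u'(z*)` survives; e.g. `z ↦ D f(z) (f z, 0)` has Jacobian
`∂_φ f ∘ A`. Splitting `A` and `B` into their `φ`/`θ` blocks gives `J̃ = J − (h/2) K_alt`. On the
diagonal of `K_alt` the two cross terms `α ∂_θ f ∂_φ g` and `(λ − 2α) ∂_φ g ∂_θ f` have equal
traces, which produces the coefficient `λ − α`.
-/

open ContinuousLinearMap

theorem HasFDerivAt.clm_apply_of_eq_zero {𝕜 E G H : Type*} [NontriviallyNormedField 𝕜]
    [NormedAddCommGroup E] [NormedSpace 𝕜 E] [NormedAddCommGroup G] [NormedSpace 𝕜 G]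
    [NormedAddCommGroup H] [NormedSpace 𝕜 H] {c : E → G →L[𝕜] H} {c' : E →L[𝕜] G →L[𝕜] H}
    {u : E → G} {u' : E →L[𝕜] G} {x : E} (hc : HasFDerivAt c c' x) (hu : HasFDerivAt u u' x)
    (hux : u x = 0) : HasFDerivAt (fun y => c y (u y)) (c x ∘L u') x := by
  simpa [hux] using hc.clm_apply hu

theorem LinearMap.trace_prod_coprod {R M N : Type*} [CommRing R] [AddCommGroup M] [Module R M]
    [AddCommGroup N] [Module R N] [Module.Free R M] [Module.Finite R M] [Module.Free R N]
    [Module.Finite R N] (A : M →ₗ[R] M) (B : N →ₗ[R] M) (C : M →ₗ[R] N) (D : N →ₗ[R] N) :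
    trace R (M × N) ((A.coprod B).prod (C.coprod D)) = trace R M A + trace R N D := by
  have hdecomp : (A.coprod B).prod (C.coprod D) =
      A.prodMap D + inl R M N ∘ₗ B ∘ₗ snd R M N + inr R M N ∘ₗ C ∘ₗ fst R M N := by
    refine LinearMap.ext fun ⟨x, y⟩ => ?_
    simp [add_comm]
  have hB : trace R (M × N) (inl R M N ∘ₗ B ∘ₗ snd R M N) = 0 := by
    rw [← comp_assoc, trace_comp_comm', ← comp_assoc]
    simp
  have hC : trace R (M × N) (inr R M N ∘ₗ C ∘ₗ fst R M N) = 0 := by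
    rw [← comp_assoc, trace_comp_comm', ← comp_assoc]
    simp
  rw [hdecomp, map_add, map_add, trace_prodMap', hB, hC, add_zero, add_zero]

section Blocks

variable {E F : Type*} [NormedAddCommGroup E] [NormedSpace ℝ E] [NormedAddCommGroup F]
  [NormedSpace ℝ F]

/-- The paper's `K_alt`, for the blocks `Aφ = ∇_φ f`, `Aθ = ∇_θ f`, `Bφ = ∇_φ g`, `Bθ = ∇_θ g`
and sub-step numbers `μ = m`, `κ = k`. -/
def alternatingCorrection (α lam μ κ : ℝ) (Aφ : E →L[ℝ] E) (Aθ : F →L[ℝ] E) (Bφ : E →L[ℝ] F)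
    (Bθ : F →L[ℝ] F) : E × F →L[ℝ] E × F :=
  (((α / μ) • (Aφ ∘L Aφ) + α • (Aθ ∘L Bφ)).coprod ((α / μ) • (Aφ ∘L Aθ) + α • (Aθ ∘L Bθ))).prod
    (((lam / κ) • (Bθ ∘L Bφ) + (lam * (1 - 2 * α / lam)) • (Bφ ∘L Aφ)).coprod
      ((lam / κ) • (Bθ ∘L Bθ) + (lam * (1 - 2 * α / lam)) • (Bφ ∘L Aθ)))

theorem modifiedJacobian_eq_sub_alternatingCorrection (α lam h μ κ : ℝ) (Aφ : E →L[ℝ] E)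
    (Aθ : F →L[ℝ] E) (Bφ : E →L[ℝ] F) (Bθ : F →L[ℝ] F) :
    (Aφ.coprod Aθ - (α * h / 2) • ((1 / μ) • (Aφ ∘L Aφ.coprod Aθ) + Aθ ∘L Bφ.coprod Bθ)).prod
        (Bφ.coprod Bθ - (lam * h / 2) •
          ((1 - 2 * α / lam) • (Bφ ∘L Aφ.coprod Aθ) + (1 / κ) • (Bθ ∘L Bφ.coprod Bθ))) =
      (Aφ.coprod Aθ).prod (Bφ.coprod Bθ) -
        (h / 2) • alternatingCorrection α lam μ κ Aφ Aθ Bφ Bθ := by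
  refine ContinuousLinearMap.ext fun ⟨v, w⟩ => Prod.ext ?_ ?_ <;>
    simp only [alternatingCorrection, sub_apply, smul_apply, add_apply, prod_apply, coprod_apply,
      comp_apply, map_add, Prod.fst_sub, Prod.snd_sub, Prod.smul_fst, Prod.smul_snd] <;>
    module

variable [FiniteDimensional ℝ E] [FiniteDimensional ℝ F]

theorem trace_alternatingCorrection {α lam : ℝ} (hlam : lam ≠ 0) (μ κ : ℝ) (Aφ : E →L[ℝ] E)
    (Aθ : F →L[ℝ] E) (Bφ : E →L[ℝ] F) (Bθ : F →L[ℝ] F) :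
    LinearMap.trace ℝ (E × F) (alternatingCorrection α lam μ κ Aφ Aθ Bφ Bθ : _ →ₗ[ℝ] _) =
      (α / μ) * LinearMap.trace ℝ E (Aφ ∘L Aφ : _ →ₗ[ℝ] _) +
        (lam / κ) * LinearMap.trace ℝ F (Bθ ∘L Bθ : _ →ₗ[ℝ] _) +
        (lam - α) * LinearMap.trace ℝ E (Aθ ∘L Bφ : _ →ₗ[ℝ] _) := by
  have hcross : LinearMap.trace ℝ F (Bφ ∘L Aθ : _ →ₗ[ℝ] _) =
      LinearMap.trace ℝ E (Aθ ∘L Bφ : _ →ₗ[ℝ] _) :=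
    LinearMap.trace_comp_comm' (Aθ : F →ₗ[ℝ] E) Bφ
  simp only [alternatingCorrection, coe_prod, coe_coprod, LinearMap.trace_prod_coprod, toLinearMap_add,
    toLinearMap_smul, map_add, map_smul, hcross, smul_eq_mul]
  field_simp
  ring

end Blocks

section PartialDerivatives

variable {m n : ℕ} {W : Type*} [NormedAddCommGroup W] [NormedSpace ℝ W]
  {p : EuclideanSpace ℝ (Fin m) × EuclideanSpace ℝ (Fin n) → W}
  {z : EuclideanSpace ℝ (Fin m) × EuclideanSpace ℝ (Fin n)}

theorem hasFDerivAt_fderiv_apply_inl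
    {u : EuclideanSpace ℝ (Fin m) × EuclideanSpace ℝ (Fin n) → EuclideanSpace ℝ (Fin m)}
    {u' : EuclideanSpace ℝ (Fin m) × EuclideanSpace ℝ (Fin n) →L[ℝ] EuclideanSpace ℝ (Fin m)}
    (hp : DifferentiableAt ℝ (fderiv ℝ p) z) (hu : HasFDerivAt u u' z) (huz : u z = 0) :
    HasFDerivAt (fun y => fderiv ℝ p y (u y, 0)) (dPhi p z ∘L u') z := by
  refine (hp.hasFDerivAt.clm_apply_of_eq_zero (hu.prodMk (hasFDerivAt_const 0 z))
    (by rw [huz, Prod.mk_zero_zero])).congr_fderiv (ContinuousLinearMap.ext fun v => ?_)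
  simp [dPhi]

theorem hasFDerivAt_fderiv_apply_inr
    {u : EuclideanSpace ℝ (Fin m) × EuclideanSpace ℝ (Fin n) → EuclideanSpace ℝ (Fin n)}
    {u' : EuclideanSpace ℝ (Fin m) × EuclideanSpace ℝ (Fin n) →L[ℝ] EuclideanSpace ℝ (Fin n)}
    (hp : DifferentiableAt ℝ (fderiv ℝ p) z) (hu : HasFDerivAt u u' z) (huz : u z = 0) :
    HasFDerivAt (fun y => fderiv ℝ p y (0, u y)) (dTheta p z ∘L u') z := by
  refine (hp.hasFDerivAt.clm_apply_of_eq_zero ((hasFDerivAt_const 0 z).prodMk hu)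
    (by rw [huz, Prod.mk_zero_zero])).congr_fderiv (ContinuousLinearMap.ext fun v => ?_)
  simp [dTheta]

end PartialDerivatives

theorem modified_jacobian_alternating_general {m n : ℕ}
    (f : EuclideanSpace ℝ (Fin m) × EuclideanSpace ℝ (Fin n) → EuclideanSpace ℝ (Fin m))
    (g : EuclideanSpace ℝ (Fin m) × EuclideanSpace ℝ (Fin n) → EuclideanSpace ℝ (Fin n))
    (hf : ContDiff ℝ 2 f) (hg : ContDiff ℝ 2 g)
    (zs : EuclideanSpace ℝ (Fin m) × EuclideanSpace ℝ (Fin n))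
    (hfz : f zs = 0) (hgz : g zs = 0)
    (α lam h : ℝ) (hlam : 0 < lam)
    (msub ksub : ℕ)
    (Ftilde : EuclideanSpace ℝ (Fin m) × EuclideanSpace ℝ (Fin n) →
      EuclideanSpace ℝ (Fin m) × EuclideanSpace ℝ (Fin n))
    (hFtilde : Ftilde = fun z =>
      (f z - (α * h / 2) •
          ((1 / (msub : ℝ)) • fderiv ℝ f z (f z, 0) + fderiv ℝ f z (0, g z)),
       g z - (lam * h / 2) •
          ((1 - 2 * α / lam) • fderiv ℝ g z (f z, 0) +
            (1 / (ksub : ℝ)) • fderiv ℝ g z (0, g z)))) :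
    fderiv ℝ Ftilde zs =
      fderiv ℝ (fun z => (f z, g z)) zs -
        (h / 2) •
          (ContinuousLinearMap.prod
            (((α / (msub : ℝ)) • (dPhi f zs ∘L dPhi f zs) +
                α • (dTheta f zs ∘L dPhi g zs)).coprod
              ((α / (msub : ℝ)) • (dPhi f zs ∘L dTheta f zs) +
                α • (dTheta f zs ∘L dTheta g zs)))
            (((lam / (ksub : ℝ)) • (dTheta g zs ∘L dPhi g zs) +
                (lam * (1 - 2 * α / lam)) • (dPhi g zs ∘L dPhi f zs)).coprod
              ((lam / (ksub : ℝ)) • (dTheta g zs ∘L dTheta g zs) +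
                (lam * (1 - 2 * α / lam)) • (dPhi g zs ∘L dTheta f zs)))) ∧
    LinearMap.trace ℝ (EuclideanSpace ℝ (Fin m) × EuclideanSpace ℝ (Fin n))
        (fderiv ℝ Ftilde zs : _ →ₗ[ℝ] _) =
      LinearMap.trace ℝ (EuclideanSpace ℝ (Fin m) × EuclideanSpace ℝ (Fin n))
          (fderiv ℝ (fun z => (f z, g z)) zs : _ →ₗ[ℝ] _) -
        (h / 2) *
          ((α / (msub : ℝ)) *
              LinearMap.trace ℝ (EuclideanSpace ℝ (Fin m)) (dPhi f zs ∘L dPhi f zs : _ →ₗ[ℝ] _) +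
            (lam / (ksub : ℝ)) *
              LinearMap.trace ℝ (EuclideanSpace ℝ (Fin n)) (dTheta g zs ∘L dTheta g zs : _ →ₗ[ℝ] _)) -
        (h / 2) * (lam - α) *
          LinearMap.trace ℝ (EuclideanSpace ℝ (Fin m)) (dTheta f zs ∘L dPhi g zs : _ →ₗ[ℝ] _) := by
  have hdf : DifferentiableAt ℝ f zs := hf.differentiable two_ne_zero zs
  have hdg : DifferentiableAt ℝ g zs := hg.differentiable two_ne_zero zs
  have hdf' : DifferentiableAt ℝ (fderiv ℝ f) zs :=
    (hf.fderiv_right le_rfl).differentiable one_ne_zero zs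
  have hdg' : DifferentiableAt ℝ (fderiv ℝ g) zs :=
    (hg.fderiv_right le_rfl).differentiable one_ne_zero zs
  have hA : (dPhi f zs).coprod (dTheta f zs) = fderiv ℝ f zs := coprod_comp_inl_inr _
  have hB : (dPhi g zs).coprod (dTheta g zs) = fderiv ℝ g zs := coprod_comp_inl_inr _
  have hF := (hdf.hasFDerivAt.sub
      ((((hasFDerivAt_fderiv_apply_inl hdf' hdf.hasFDerivAt hfz).const_smul (1 / (msub : ℝ))).add
        (hasFDerivAt_fderiv_apply_inr hdf' hdg.hasFDerivAt hgz)).const_smul (α * h / 2))).prodMk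
    (hdg.hasFDerivAt.sub
      ((((hasFDerivAt_fderiv_apply_inl hdg' hdf.hasFDerivAt hfz).const_smul (1 - 2 * α / lam)).add
        ((hasFDerivAt_fderiv_apply_inr hdg' hdg.hasFDerivAt hgz).const_smul
          (1 / (ksub : ℝ)))).const_smul (lam * h / 2)))
  rw [← hA, ← hB, modifiedJacobian_eq_sub_alternatingCorrection, hA, hB,
    ← hdf.fderiv_prodMk hdg] at hF
  have hJac : fderiv ℝ Ftilde zs = _ := hFtilde ▸ hF.fderiv
  refine ⟨hJac, ?_⟩
  rw [hJac, toLinearMap_sub, toLinearMap_smul, map_sub, map_smul,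
    trace_alternatingCorrection hlam.ne', smul_eq_mul]
  ring

/-- **Modified Jacobian at an equilibrium (alternating gradient descent).**
At an equilibrium `f = 0 = g`, the Jacobian of the modified vector field of alternating
gradient descent equals `J − (h/2)·K_alt`, and in particular
`Tr(J̃) = Tr(J) − (h/2)((α/m)Tr((∇_φ f)²) + (λ/k)Tr((∇_θ g)²)) − (h/2)(λ − α)Tr(∇_φ g·∇_θ f)`. -/
theorem modified_jacobian_alternating {m n : ℕ}
    (f : EuclideanSpace ℝ (Fin m) × EuclideanSpace ℝ (Fin n) → EuclideanSpace ℝ (Fin m))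
    (g : EuclideanSpace ℝ (Fin m) × EuclideanSpace ℝ (Fin n) → EuclideanSpace ℝ (Fin n))
    (hf : ContDiff ℝ 2 f) (hg : ContDiff ℝ 2 g)
    (zs : EuclideanSpace ℝ (Fin m) × EuclideanSpace ℝ (Fin n))
    (hfz : f zs = 0) (hgz : g zs = 0)
    (α lam h : ℝ) (hα : 0 < α) (hlam : 0 < lam) (hh : 0 < h)
    (msub ksub : ℕ) (hmsub : 0 < msub) (hksub : 0 < ksub)
    (Ftilde : EuclideanSpace ℝ (Fin m) × EuclideanSpace ℝ (Fin n) →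
      EuclideanSpace ℝ (Fin m) × EuclideanSpace ℝ (Fin n))
    (hFtilde : Ftilde = fun z =>
      (f z - (α * h / 2) •
          ((1 / (msub : ℝ)) • fderiv ℝ f z (f z, 0) + fderiv ℝ f z (0, g z)),
       g z - (lam * h / 2) •
          ((1 - 2 * α / lam) • fderiv ℝ g z (f z, 0) +
            (1 / (ksub : ℝ)) • fderiv ℝ g z (0, g z)))) :
    fderiv ℝ Ftilde zs =
      fderiv ℝ (fun z => (f z, g z)) zs -
        (h / 2) •
          (ContinuousLinearMap.prod
            (((α / (msub : ℝ)) • (dPhi f zs ∘L dPhi f zs) +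
                α • (dTheta f zs ∘L dPhi g zs)).coprod
              ((α / (msub : ℝ)) • (dPhi f zs ∘L dTheta f zs) +
                α • (dTheta f zs ∘L dTheta g zs)))
            (((lam / (ksub : ℝ)) • (dTheta g zs ∘L dPhi g zs) +
                (lam * (1 - 2 * α / lam)) • (dPhi g zs ∘L dPhi f zs)).coprod
              ((lam / (ksub : ℝ)) • (dTheta g zs ∘L dTheta g zs) +
                (lam * (1 - 2 * α / lam)) • (dPhi g zs ∘L dTheta f zs)))) ∧
    LinearMap.trace ℝ (EuclideanSpace ℝ (Fin m) × EuclideanSpace ℝ (Fin n))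
        (fderiv ℝ Ftilde zs : _ →ₗ[ℝ] _) =
      LinearMap.trace ℝ (EuclideanSpace ℝ (Fin m) × EuclideanSpace ℝ (Fin n))
          (fderiv ℝ (fun z => (f z, g z)) zs : _ →ₗ[ℝ] _) -
        (h / 2) *
          ((α / (msub : ℝ)) *
              LinearMap.trace ℝ (EuclideanSpace ℝ (Fin m)) (dPhi f zs ∘L dPhi f zs : _ →ₗ[ℝ] _) +
            (lam / (ksub : ℝ)) *
              LinearMap.trace ℝ (EuclideanSpace ℝ (Fin n)) (dTheta g zs ∘L dTheta g zs : _ →ₗ[ℝ] _)) -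
        (h / 2) * (lam - α) *
          LinearMap.trace ℝ (EuclideanSpace ℝ (Fin m)) (dTheta f zs ∘L dPhi g zs : _ →ₗ[ℝ] _) :=
  modified_jacobian_alternating_general f g hf hg zs hfz hgz α lam h hlam msub ksub Ftilde hFtilde
end
end
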